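/- Let H be a separable Hilbert space with an increasing sequence of finite-dimensional subspaces E_R = span{e_0, …, e_R} (where (e_j) is an orthonormal basis), and let (μ_R) be a projective family of finite Borel measures on the E_R (i.e. the pushforward of μ_{R+j} under the orthogonal projection E_{R+j} → E_R equals μ_R, and all have the same total mass m). Suppose there exist δ > 0 and K > 0 such that for every R and r ≥ 1, μ_R({f ∈ E_R : ‖f‖² ≥ r}) ≤ K (1+r)^{−δ}. Then the projective family extends to a countably additive Borel measure μ on H such that the pushforward of μ under the orthogonal projection onto E_R equals μ_R for every R. -/

import Mathlib

/-!
Kolmogorov's extension theorem turns the projective family into a measure on coordinate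
sequences `x : ℕ → ℂ`, which is then pushed to `H` by `x ↦ ∑ x j • e j`. Kolmogorov's
σ-additivity argument needs inner approximation by compact cylinders, so it is run after a
measurable embedding of `ℂ` into the compact space `EReal × EReal`. The tail bound makes
`(‖x j‖²)` summable almost everywhere: the set where some partial sum reaches `r` has measure at
most `K (1 + r)^(-δ)`, which tends to `0`. Off a null set the series `∑ x j • e j` therefore
converges, and `⟪e j, ·⟫` recovers `x j` from it.
-/

open MeasureTheory Filter Topology Set
open scoped ENNReal InnerProductSpace

namespace MeasureTheory

variable {ι : Type*} {α : ι → Type*} [∀ i, TopologicalSpace (α i)] [∀ i, MeasurableSpace (α i)]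
  [∀ i, TopologicalSpace.PseudoMetrizableSpace (α i)] [∀ i, SecondCountableTopology (α i)]
  [∀ i, BorelSpace (α i)]
  {P : ∀ J : Finset ι, Measure (Π j : J, α j)} [∀ J, IsFiniteMeasure (P J)]

lemma exists_isClosed_cylinder_sdiff_le (hP : IsProjectiveMeasureFamily P)
    {s : Set (Π i, α i)} (hs : s ∈ measurableCylinders α) {ε : ℝ≥0∞} (hε : ε ≠ 0) :
    ∃ t ∈ measurableCylinders α, t ⊆ s ∧ IsClosed t ∧ projectiveFamilyContent hP (s \ t) ≤ ε := by
  obtain ⟨I, S, hS, rfl⟩ := (mem_measurableCylinders s).1 hs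
  obtain ⟨F, hFS, hF, hlt⟩ := hS.exists_isClosed_sdiff_lt (measure_ne_top (P I) S) hε
  refine ⟨cylinder I F, cylinder_mem_measurableCylinders I F hF.measurableSet,
    preimage_mono hFS, hF.cylinder I, ?_⟩
  rw [sdiff_cylinder_same, projectiveFamilyContent_cylinder hP (hS.diff hF.measurableSet)]
  exact hlt.le

variable [∀ i, CompactSpace (α i)]

/-- Approximate the cylinders from inside by closed, hence compact, cylinders: finitely many of
these already have empty intersection. -/
theorem projectiveFamilyContent_tendsto_zero_of_compactSpace (hP : IsProjectiveMeasureFamily P)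
    {A : ℕ → Set (Π i, α i)} (hA : ∀ n, A n ∈ measurableCylinders α) (hA_anti : Antitone A)
    (hA_inter : ⋂ n, A n = ∅) :
    Tendsto (fun n ↦ projectiveFamilyContent hP (A n)) atTop (𝓝 0) := by
  refine ENNReal.tendsto_atTop_zero.2 fun ε hε ↦ ?_
  obtain ⟨δ, hδ_pos, hδ_sum⟩ := ENNReal.exists_pos_sum_of_countable hε.ne' ℕ
  choose t ht_mem ht_sub ht_closed ht_le using fun n ↦
    exists_isClosed_cylinder_sdiff_le hP (hA n) (ENNReal.coe_ne_zero.2 (hδ_pos n).ne')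
  obtain ⟨N, hN⟩ : ∃ N, dissipate t N = ∅ :=
    isCompactSystem_isCompact_isClosed _ t (fun n ↦ ⟨(ht_closed n).isCompact, ht_closed n⟩)
      (subset_empty_iff.1 <| hA_inter ▸ iInter_mono ht_sub)
  have hdiff_mem : ∀ k, A k \ t k ∈ measurableCylinders α := fun k ↦
    isSetRing_measurableCylinders.sdiff_mem (hA k) (ht_mem k)
  refine ⟨N, fun n hn ↦ ?_⟩
  have hcover : A n ⊆ ⋃ k ∈ Finset.range (n + 1), A k \ t k := by
    intro x hx
    have hx_notMem : x ∉ dissipate t n := fun h ↦ by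
      simpa [hN] using dissipate_subset_dissipate hn h
    obtain ⟨k, hk, hxk⟩ : ∃ k ≤ n, x ∉ t k := by simpa [mem_dissipate] using hx_notMem
    exact mem_biUnion (Finset.mem_range.2 (Nat.lt_succ_of_le hk)) ⟨hA_anti hk hx, hxk⟩
  calc projectiveFamilyContent hP (A n)
      ≤ projectiveFamilyContent hP (⋃ k ∈ Finset.range (n + 1), A k \ t k) :=
        addContent_mono isSetSemiring_measurableCylinders (hA n)
          (isSetRing_measurableCylinders.biUnion_mem _ fun k _ ↦ hdiff_mem k) hcover
    _ ≤ ∑ k ∈ Finset.range (n + 1), projectiveFamilyContent hP (A k \ t k) :=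
        addContent_biUnion_le isSetRing_measurableCylinders fun k _ ↦ hdiff_mem k
    _ ≤ ∑' k, (δ k : ℝ≥0∞) :=
        (Finset.sum_le_sum fun k _ ↦ ht_le k).trans (ENNReal.sum_le_tsum _)
    _ ≤ ε := hδ_sum.le

theorem isSigmaSubadditive_projectiveFamilyContent_of_compactSpace
    (hP : IsProjectiveMeasureFamily P) : (projectiveFamilyContent hP).IsSigmaSubadditive :=
  isSigmaSubadditive_of_addContent_iUnion_eq_tsum isSetRing_measurableCylinders
    fun _ hf hf_iUnion hf_disj ↦ addContent_iUnion_eq_sum_of_tendsto_zero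
      isSetRing_measurableCylinders _ (fun _ _ ↦ projectiveFamilyContent_ne_top hP)
      (fun _ hA hA_anti hA_inter ↦
        projectiveFamilyContent_tendsto_zero_of_compactSpace hP hA hA_anti hA_inter)
      hf hf_iUnion hf_disj

theorem IsProjectiveMeasureFamily.exists_isProjectiveLimit_of_compactSpace
    (hP : IsProjectiveMeasureFamily P) : ∃ ν : Measure (Π i, α i), IsProjectiveLimit ν P := by
  refine ⟨(projectiveFamilyContent hP).measure isSetSemiring_measurableCylinders
    generateFrom_measurableCylinders.ge
    (isSigmaSubadditive_projectiveFamilyContent_of_compactSpace hP), fun I ↦ ?_⟩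
  ext S hS
  rw [Measure.map_apply (Finset.measurable_restrict I) hS, ← cylinder, AddContent.measure_eq _ _
    generateFrom_measurableCylinders.symm _ (cylinder_mem_measurableCylinders I S hS),
    projectiveFamilyContent_cylinder hP hS]

theorem exists_map_finPrefix_eq_of_leftInverse {X E : Type*} [MeasurableSpace X]
    [TopologicalSpace E] [CompactSpace E] [TopologicalSpace.PseudoMetrizableSpace E]
    [SecondCountableTopology E] [MeasurableSpace E] [BorelSpace E]
    {ι : X → E} {ρ : E → X} (hι : Measurable ι) (hρ : Measurable ρ) (hρι : Function.LeftInverse ρ ι)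
    (μ : (R : ℕ) → Measure (Fin (R + 1) → X)) [∀ R, IsFiniteMeasure (μ R)]
    (hμ : ∀ R S : ℕ, (h : R ≤ S) →
      (μ S).map (fun x i ↦ x (Fin.castLE (Nat.succ_le_succ h) i)) = μ R) :
    ∃ ν : Measure (ℕ → X), IsFiniteMeasure ν ∧
      ∀ R, ν.map (fun x (i : Fin (R + 1)) ↦ x i) = μ R := by
  -- Extend the family moved by `ι` to `E`-valued coordinates indexed by `Finset.Iic n`, the
  -- shape `inducedFamily` expects, then bring the limit back with `ρ`.
  let embed (n : ℕ) : (Fin (n + 1) → X) → (Π _ : Finset.Iic n, E) :=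
    fun x i ↦ ι (x ⟨i, Nat.lt_succ_of_le (Finset.mem_Iic.1 i.2)⟩)
  have h_embed (n : ℕ) : Measurable (embed n) := by fun_prop
  let μE (n : ℕ) : Measure (Π _ : Finset.Iic n, E) := (μ n).map (embed n)
  have (n : ℕ) : IsFiniteMeasure (μE n) := by dsimp only [μE]; infer_instance
  have hμE (a b : ℕ) (hab : a ≤ b) :
      (μE b).map (Preorder.frestrictLe₂ (π := fun _ ↦ E) hab) = μE a := by
    change _ = (μ a).map (embed a)
    rw [Measure.map_map (Preorder.measurable_frestrictLe₂ (X := fun _ ↦ E) hab) (h_embed b),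
      ← hμ a b hab, Measure.map_map (h_embed a) (by fun_prop)]
    rfl
  have hP := isProjectiveMeasureFamily_inducedFamily (X := fun _ ↦ E) μE hμE
  have (J : Finset ℕ) : IsFiniteMeasure (inducedFamily (X := fun _ ↦ E) μE J) := inferInstance
  obtain ⟨ν, hν⟩ := hP.exists_isProjectiveLimit_of_compactSpace
  have hνE (n : ℕ) : ν.map (Preorder.frestrictLe n) = μE n := by
    rw [(isProjectiveLimit_nat_iff hP ν).1 hν n, inducedFamily_Iic]
  have := hν.isFiniteMeasure
  let eject (n : ℕ) : (Π _ : Finset.Iic n, E) → (Fin (n + 1) → X) :=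
    fun y i ↦ ρ (y ⟨i, Finset.mem_Iic.2 (Nat.le_of_lt_succ i.2)⟩)
  have h_eject (n : ℕ) : Measurable (eject n) := by fun_prop
  refine ⟨ν.map (fun y n ↦ ρ (y n)), inferInstance, fun R ↦ ?_⟩
  rw [Measure.map_map (by fun_prop) (by fun_prop)]
  change ν.map (eject R ∘ Preorder.frestrictLe R) = μ R
  rw [← Measure.map_map (h_eject R) (Preorder.measurable_frestrictLe R), hνE,
    Measure.map_map (h_eject R) (h_embed R)]
  conv_rhs => rw [← Measure.map_id (μ := μ R)]
  congr 1
  funext x i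
  exact hρι _

lemma measure_le_sum_range_eq_map_finPrefix {F : Type*} [MeasurableSpace F] {φ : F → ℝ}
    (hφ : Measurable φ) (ν : Measure (ℕ → F)) (r : ℝ) (R : ℕ) :
    ν {x | r ≤ ∑ i ∈ Finset.range (R + 1), φ (x i)} =
      ν.map (fun x (i : Fin (R + 1)) ↦ x i) {y | r ≤ ∑ i, φ (y i)} := by
  rw [Measure.map_apply (by fun_prop) (measurableSet_le measurable_const (by fun_prop))]
  congr 1
  ext x
  simp [Fin.sum_univ_eq_sum_range (fun i ↦ φ (x i))]

end MeasureTheory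

lemma Complex.exists_measurable_leftInverse_ereal_prod :
    ∃ (ι : ℂ → EReal × EReal) (ρ : EReal × EReal → ℂ),
      Measurable ι ∧ Measurable ρ ∧ Function.LeftInverse ρ ι :=
  ⟨fun z ↦ (z.re, z.im), fun p ↦ p.1.toReal + p.2.toReal * Complex.I, by fun_prop, by fun_prop,
    fun z ↦ by simp [Complex.re_add_im]⟩

theorem MeasureTheory.ae_summable_of_uniform_tail_bound {Ω : Type*} [MeasurableSpace Ω]
    {ν : Measure Ω} {f : Ω → ℕ → ℝ} (hf : ∀ ω i, 0 ≤ f ω i) {g : ℝ → ℝ≥0∞}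
    (hg : Tendsto g atTop (𝓝 0))
    (htail : ∀ᶠ r in atTop, ∀ n, ν {ω | r ≤ ∑ i ∈ Finset.range (n + 1), f ω i} ≤ g r) :
    ∀ᵐ ω ∂ν, Summable (f ω) := by
  rw [ae_iff]
  refine le_antisymm (ge_of_tendsto hg (htail.mono fun r hr ↦ ?_)) zero_le
  have hmono : Monotone fun n ↦ {ω | r ≤ ∑ i ∈ Finset.range (n + 1), f ω i} :=
    fun a b hab ω hω ↦ hω.trans <| Finset.sum_le_sum_of_subset_of_nonneg
      (Finset.range_subset_range.2 (by omega)) fun i _ _ ↦ hf ω i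
  have hsub : {ω | ¬Summable (f ω)} ⊆ ⋃ n, {ω | r ≤ ∑ i ∈ Finset.range (n + 1), f ω i} := by
    intro ω hω
    have hdiv := (not_summable_iff_tendsto_nat_atTop_of_nonneg (hf ω)).1 hω
    exact mem_iUnion.2 ((hdiv.comp (tendsto_add_atTop_nat 1)).eventually_ge_atTop r).exists
  calc ν {ω | ¬Summable (f ω)} ≤ ν (⋃ n, {ω | r ≤ ∑ i ∈ Finset.range (n + 1), f ω i}) :=
        measure_mono hsub
    _ = ⨆ n, ν {ω | r ≤ ∑ i ∈ Finset.range (n + 1), f ω i} := hmono.measure_iUnion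
    _ ≤ g r := iSup_le hr

section Synthesis

variable {𝕜 H ι : Type*} [RCLike 𝕜] [NormedAddCommGroup H] [InnerProductSpace 𝕜 H]
  {e : ι → H}

lemma Orthonormal.inner_tsum_smul (he : Orthonormal 𝕜 e) {x : ι → 𝕜}
    (hx : Summable fun i ↦ x i • e i) (j : ι) : ⟪e j, ∑' i, x i • e i⟫_𝕜 = x j := by
  classical
  refine (hx.hasSum.mapL (innerSL 𝕜 (e j))).unique ?_
  convert hasSum_ite_eq j (x j) using 1
  funext i
  rw [innerSL_apply_apply, inner_smul_right, orthonormal_iff_ite.1 he j i]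
  by_cases h : i = j <;> simp [h, Ne.symm]

variable [CompleteSpace H]

lemma Orthonormal.summable_smul_iff (he : Orthonormal 𝕜 e) {x : ι → 𝕜} :
    (Summable fun i ↦ x i • e i) ↔ Summable fun i ↦ ‖x i‖ ^ 2 := by
  simpa using he.orthogonalFamily.summable_iff_norm_sq_summable x

variable [MeasurableSpace 𝕜] [BorelSpace 𝕜] [MeasurableSpace H] [BorelSpace H]

lemma Orthonormal.aemeasurable_tsum_smul {e : ℕ → H} (he : Orthonormal 𝕜 e) {μ : Measure (ℕ → 𝕜)}
    (hμ : ∀ᵐ x ∂μ, Summable fun i ↦ ‖x i‖ ^ 2) :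
    AEMeasurable (fun x ↦ ∑' i, x i • e i) μ := by
  refine aemeasurable_of_tendsto_metrizable_ae' (f := fun n x ↦ ∑ i ∈ Finset.range n, x i • e i)
    (fun n ↦ (continuous_finsetSum _ fun i _ ↦
      (continuous_apply i).smul continuous_const).measurable.aemeasurable) ?_
  filter_upwards [hμ] with x hx
  exact ((he.summable_smul_iff).2 hx).hasSum.tendsto_sum_nat

end Synthesis

theorem stmt_6_general {H : Type*} [NormedAddCommGroup H] [InnerProductSpace ℂ H] [CompleteSpace H]
    [MeasurableSpace H] [BorelSpace H]
    (e : ℕ → H) (he : Orthonormal ℂ e)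
    (μ : (R : ℕ) → Measure (Fin (R + 1) → ℂ))
    (hfin : ∀ R, IsFiniteMeasure (μ R))
    (hproj : ∀ R S : ℕ, (h : R ≤ S) →
      (μ S).map (fun x => fun i : Fin (R + 1) => x (Fin.castLE (Nat.succ_le_succ h) i)) = μ R)
    (δ K : ℝ) (hδ : 0 < δ)
    (htail : ∀ (R : ℕ) (r : ℝ), 1 ≤ r →
      ((μ R) {x : Fin (R + 1) → ℂ | r ≤ ∑ i, ‖x i‖ ^ 2}).toReal ≤ K * (1 + r) ^ (-δ)) :
    ∃ ν : Measure H, IsFiniteMeasure ν ∧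
      ∀ R : ℕ, ν.map (fun f => fun j : Fin (R + 1) => (inner ℂ (e j) f : ℂ)) = μ R := by
  obtain ⟨ι, ρ, hι, hρ, hρι⟩ := Complex.exists_measurable_leftInverse_ereal_prod
  obtain ⟨μseq, hμseq_fin, hμseq⟩ := exists_map_finPrefix_eq_of_leftInverse hι hρ hρι μ hproj
  have hsq : ∀ᵐ x ∂μseq, Summable fun i ↦ ‖x i‖ ^ 2 := by
    refine ae_summable_of_uniform_tail_bound (fun x i ↦ sq_nonneg ‖x i‖)
      (g := fun r ↦ ENNReal.ofReal (K * (1 + r) ^ (-δ))) ?_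
      ((eventually_ge_atTop 1).mono fun r hr R ↦ ?_)
    · simpa using ENNReal.tendsto_ofReal <| ((tendsto_rpow_neg_atTop hδ).comp
        (tendsto_atTop_add_const_left _ 1 tendsto_id)).const_mul K
    · rw [measure_le_sum_range_eq_map_finPrefix (φ := fun z : ℂ ↦ ‖z‖ ^ 2) (by fun_prop) μseq r R,
        hμseq R,
        ← ENNReal.ofReal_toReal (measure_ne_top _ _)]
      exact ENNReal.ofReal_le_ofReal (htail R r hr)
  refine ⟨μseq.map fun x ↦ ∑' i, x i • e i, inferInstance, fun R ↦ ?_⟩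
  rw [AEMeasurable.map_map_of_aemeasurable (by fun_prop) (he.aemeasurable_tsum_smul hsq),
    ← hμseq R]
  refine Measure.map_congr ?_
  filter_upwards [hsq] with x hx
  funext j
  exact he.inner_tsum_smul ((he.summable_smul_iff).2 hx) j

/-- Let `H` be a separable Hilbert space with orthonormal basis `(e_j)` and
`E_R = span{e_0,…,e_R}` (identified with `Fin (R+1) → ℂ` via coordinates in the basis).
Let `(μ_R)` be a projective family of finite Borel measures of common total mass `m` on the
spaces `E_R` (pushforward under the orthogonal projection `E_S → E_R`, `R ≤ S`, i.e. under
restriction of coordinates, equals `μ_R`). If there are `δ > 0` and `K > 0` with the uniform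
tail bound `μ_R {f : ‖f‖² ≥ r} ≤ K (1+r)^{−δ}` for all `R` and all `r ≥ 1`, then the
projective family extends to a (countably additive, finite) Borel measure `ν` on `H` whose
pushforward under the coordinate map onto `E_R` is `μ_R` for every `R`. -/
theorem stmt_6 {H : Type*} [NormedAddCommGroup H] [InnerProductSpace ℂ H] [CompleteSpace H]
    [MeasurableSpace H] [BorelSpace H]
    (e : ℕ → H) (he : Orthonormal ℂ e)
    (hdense : Dense (Submodule.span ℂ (Set.range e) : Set H))
    (μ : (R : ℕ) → Measure (Fin (R + 1) → ℂ))
    (hfin : ∀ R, IsFiniteMeasure (μ R))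
    (m : ENNReal) (hmass : ∀ R, μ R Set.univ = m)
    (hproj : ∀ R S : ℕ, (h : R ≤ S) →
      (μ S).map (fun x => fun i : Fin (R + 1) => x (Fin.castLE (Nat.succ_le_succ h) i)) = μ R)
    (δ K : ℝ) (hδ : 0 < δ) (hK : 0 < K)
    (htail : ∀ (R : ℕ) (r : ℝ), 1 ≤ r →
      ((μ R) {x : Fin (R + 1) → ℂ | r ≤ ∑ i, ‖x i‖ ^ 2}).toReal ≤ K * (1 + r) ^ (-δ)) :
    ∃ ν : Measure H, IsFiniteMeasure ν ∧
      ∀ R : ℕ, ν.map (fun f => fun j : Fin (R + 1) => (inner ℂ (e j) f : ℂ)) = μ R :=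
  stmt_6_general e he μ hfin hproj δ K hδ htail
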